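/- arXiv:1409.7529 — 2 statements merged into one kernel-verified Lean document; each statement's English description precedes it below -/
import Mathlib

section
/- Let β : ℝ → [0,∞) be smooth, supported in (−∞,0], with β'' non-increasing on ℝ. Then on any set where β > 0, one has β'' > 0 and β' < 0. Moreover, for any c₀ > 0, the quantity (β'(s))²/β''(s) is bounded on [−c₀, 0) ∩ {β'' > 0} by a finite constant C₁ depending only on β and c₀. -/
/-- Properties of a smooth penalisation profile `β : ℝ → [0,∞)`, supported in `(-∞,0]`,
with non-increasing second derivative: wherever `β > 0` one has `β'' > 0` and `β' < 0`;
moreover for every `c₀ > 0` the quantity `(β')²/β''` is bounded on `[-c₀,0) ∩ {β'' > 0}`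
by a constant depending only on `β` and `c₀`. -/
theorem penalisation_profile_properties
    (β : ℝ → ℝ)
    (hβ : ContDiff ℝ (⊤ : ℕ∞) β)
    (hnonneg : ∀ s, 0 ≤ β s)
    (hsupp : ∀ s, 0 ≤ s → β s = 0)
    (hmono : Antitone (deriv (deriv β))) :
    (∀ s, 0 < β s → 0 < deriv (deriv β) s ∧ deriv β s < 0) ∧
    (∀ c₀ : ℝ, 0 < c₀ → ∃ C₁ : ℝ,
      ∀ s ∈ Set.Ico (-c₀) (0 : ℝ), 0 < deriv (deriv β) s →
        (deriv β s) ^ 2 / deriv (deriv β) s ≤ C₁) := by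
  have hd : Differentiable ℝ β := hβ.differentiable (by simp)
  have hd' : Differentiable ℝ (deriv β) := (contDiff_infty_iff_deriv.mp (hβ.of_le (by simp))).2.differentiable (by norm_num)
  -- deriv β vanishes on [0, ∞)
  have hderiv0 : ∀ s : ℝ, 0 ≤ s → deriv β s = 0 := by
    intro s hs
    rcases eq_or_lt_of_le hs with h | h
    · have hm : IsLocalMin β 0 := Filter.Eventually.of_forall
        (fun t => by rw [hsupp 0 le_rfl]; exact hnonneg t)
      rw [← h]; exact hm.deriv_eq_zero
    · have heq : β =ᶠ[nhds s] (fun _ => (0:ℝ)) :=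
        Filter.eventuallyEq_of_mem (Ioi_mem_nhds h) (fun t ht => hsupp t (le_of_lt ht))
      rw [heq.deriv_eq, deriv_const]
  -- second derivative vanishes on (0, ∞)
  have hderiv20 : ∀ s : ℝ, 0 < s → deriv (deriv β) s = 0 := by
    intro s hs
    have heq : deriv β =ᶠ[nhds s] (fun _ => (0:ℝ)) :=
      Filter.eventuallyEq_of_mem (Ioi_mem_nhds hs) (fun t ht => hderiv0 t (le_of_lt ht))
    rw [heq.deriv_eq, deriv_const]
  -- second derivative is nonnegative
  have h2nonneg : ∀ s : ℝ, 0 ≤ deriv (deriv β) s := by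
    intro s
    have h1 : s ≤ |s| + 1 := le_trans (le_abs_self s) (by linarith)
    have h2 : 0 < |s| + 1 := by positivity
    have := hmono h1
    rwa [hderiv20 _ h2] at this
  -- deriv β is monotone
  have hmon' : Monotone (deriv β) := monotone_of_deriv_nonneg hd' h2nonneg
  -- deriv β is nonpositive
  have h'nonpos : ∀ s : ℝ, deriv β s ≤ 0 := by
    intro s
    have := hmon' (le_max_left s 0)
    rwa [hderiv0 _ (le_max_right s 0)] at this
  -- MVT for deriv β on (s, 0): the key estimate
  have hmvt' : ∀ s : ℝ, s < 0 → ∃ ξ ∈ Set.Ioo s 0,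
      deriv (deriv β) ξ = (0 - deriv β s) / (0 - s) := by
    intro s hs
    obtain ⟨ξ, hξ, hval⟩ := exists_deriv_eq_slope (deriv β) hs
      (hd'.continuous.continuousOn) (hd'.differentiableOn)
    exact ⟨ξ, hξ, by rwa [hderiv0 0 le_rfl] at hval⟩
  constructor
  · intro s hβs
    have hsneg : s < 0 := by
      by_contra h
      rw [hsupp s (not_lt.mp h)] at hβs; exact lt_irrefl 0 hβs
    -- MVT for β on (s,0): deriv β is negative somewhere in (s,0)
    obtain ⟨c, hc, hcval⟩ := exists_deriv_eq_slope β hsneg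
      (hd.continuous.continuousOn) (hd.differentiableOn)
    have hc0 : deriv β c < 0 := by
      rw [hcval, hsupp 0 le_rfl]
      apply div_neg_of_neg_of_pos <;> linarith
    have h's : deriv β s < 0 := lt_of_le_of_lt (hmon' hc.1.le) hc0
    refine ⟨?_, h's⟩
    obtain ⟨ξ, hξ, hξval⟩ := hmvt' c hc.2
    have hξpos : 0 < deriv (deriv β) ξ := by
      rw [hξval]
      apply div_pos <;> linarith [hc.2, hξ.2]
    exact lt_of_lt_of_le hξpos (hmono (hc.1.le.trans hξ.1.le))
  · intro c₀ hc₀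
    refine ⟨c₀ * (-(deriv β (-c₀))), ?_⟩
    rintro s ⟨hs1, hs2⟩ hpos
    obtain ⟨ξ, hξ, hξval⟩ := hmvt' s hs2
    have hsne : s ≠ 0 := ne_of_lt hs2
    -- -deriv β s = deriv² β ξ * (-s) ≤ deriv² β s * c₀
    have h1 : -(deriv β s) = deriv (deriv β) ξ * (-s) := by
      rw [hξval]; field_simp; ring
    have h2 : deriv (deriv β) ξ ≤ deriv (deriv β) s := hmono hξ.1.le
    have h3 : -(deriv β s) ≤ deriv (deriv β) s * c₀ := by
      rw [h1]
      apply mul_le_mul h2 (by linarith) (by linarith) (le_of_lt hpos)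
    have h4 : -(deriv β s) ≤ -(deriv β (-c₀)) := by
      have := hmon' hs1; linarith
    have h5 : 0 ≤ -(deriv β s) := by linarith [h'nonpos s]
    rw [div_le_iff₀ hpos]
    nlinarith
end

section
/- Fix M ≥ 1 and set k = 1/(24 M²), η = k/2, λ = 1/(1−η), and h(y) = y·e^{ky}. Then for all y ∈ [1, M²], the quantity T₄(y) := 4 h''(y)·y − (4 + 2/(1−η))·( y·(h'(y))² / h(y) ) + 6 h'(y) − η·h(y) satisfies T₄(y) ≥ (1/8) k h(y). -/
/-!
With `t = k y`, the derivatives of `h(y) = y e^{ky}` turn `T₄(y) - k h(y) / 8` into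
`e^{ky} (2 + 43 t / 8 - a (1 + t)²)` with `a = 2 / (1 - k/2)`. Since `k ≤ t`, we have
`a ≤ 2 / (1 - t/2)`, and `(2 + 43 t / 8)(1 - t/2) - 2 (1 + t)² = t (3/8 - 75 t / 16)` is
nonnegative for `0 ≤ t ≤ 2/25`, in particular for `t ≤ k M² = 1/24`.
-/

open Real

section MulExp

variable (k : ℝ)

theorem hasDerivAt_exp_mul (y : ℝ) : HasDerivAt (fun y => exp (k * y)) (exp (k * y) * k) y :=
  ((hasDerivAt_id y).const_mul k).exp.congr_deriv (by simp)

theorem hasDerivAt_mul_exp_mul (y : ℝ) :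
    HasDerivAt (fun y => y * exp (k * y)) ((1 + k * y) * exp (k * y)) y :=
  ((hasDerivAt_id y).mul (hasDerivAt_exp_mul k y)).congr_deriv (by simp; ring)

theorem deriv_mul_exp_mul :
    deriv (fun y => y * exp (k * y)) = fun y => (1 + k * y) * exp (k * y) :=
  funext fun y => (hasDerivAt_mul_exp_mul k y).deriv

theorem deriv_deriv_mul_exp_mul (y : ℝ) :
    deriv (deriv fun y => y * exp (k * y)) y = (2 * k + k ^ 2 * y) * exp (k * y) := by
  have hlin : HasDerivAt (fun y => 1 + k * y) k y := by
    simpa using ((hasDerivAt_id y).const_mul k).const_add 1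
  rw [deriv_mul_exp_mul]
  exact (hlin.mul (hasDerivAt_exp_mul k y)).deriv.trans (by ring)

end MulExp

theorem two_div_one_sub_half_mul_sq_le {k t : ℝ} (ht0 : 0 ≤ t) (hkt : k ≤ t) (ht : t ≤ 2 / 25) :
    2 / (1 - k / 2) * (1 + t) ^ 2 ≤ 2 + 43 / 8 * t := by
  have hpos : 0 < 1 - t / 2 := by linarith
  calc 2 / (1 - k / 2) * (1 + t) ^ 2 ≤ 2 / (1 - t / 2) * (1 + t) ^ 2 := by
        gcongr
    _ ≤ 2 + 43 / 8 * t := by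
        rw [div_mul_eq_mul_div, div_le_iff₀ hpos]
        nlinarith

theorem T4_mul_exp_mul_ge {k y : ℝ} (hy : 0 < y) (hk : k ≤ k * y) (hky0 : 0 ≤ k * y)
    (hky : k * y ≤ 2 / 25) :
    let η : ℝ := k / 2
    let h : ℝ → ℝ := fun y => y * exp (k * y)
    4 * deriv (deriv h) y * y - (4 + 2 / (1 - η)) * (y * (deriv h y) ^ 2 / h y)
      + 6 * deriv h y - η * h y ≥ 1 / 8 * k * (y * exp (k * y)) := by
  intro η h
  simp only [h, η]
  rw [deriv_deriv_mul_exp_mul, deriv_mul_exp_mul]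
  have hE : 0 < exp (k * y) := exp_pos _
  have hquot : y * ((1 + k * y) * exp (k * y)) ^ 2 / (y * exp (k * y))
      = (1 + k * y) ^ 2 * exp (k * y) := by
    field_simp
  have hpoly := two_div_one_sub_half_mul_sq_le hky0 hk hky
  rw [hquot, ge_iff_le, ← sub_nonneg]
  calc 0 ≤ exp (k * y) * (2 + 43 / 8 * (k * y) - 2 / (1 - k / 2) * (1 + k * y) ^ 2) := by
        apply mul_nonneg hE.le
        linarith
    _ = _ := by ring

theorem T4_lower_bound_general (M : ℝ) :
    ∀ y ∈ Set.Icc (1 : ℝ) (M ^ 2),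
      (let k : ℝ := 1 / (24 * M ^ 2);
       let η : ℝ := k / 2;
       let h : ℝ → ℝ := fun y => y * Real.exp (k * y);
       4 * deriv (deriv h) y * y
         - (4 + 2 / (1 - η)) * (y * (deriv h y) ^ 2 / h y)
         + 6 * deriv h y - η * h y) ≥
      (1 / 8) * (1 / (24 * M ^ 2)) * (y * Real.exp ((1 / (24 * M ^ 2)) * y)) := by
  rintro y ⟨hy1, hyM⟩
  have hM : 0 < M ^ 2 := by linarith
  have hk : 0 < 1 / (24 * M ^ 2) := by positivity
  have hkM : 1 / (24 * M ^ 2) * M ^ 2 = 1 / 24 := by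
    rw [one_div_mul_eq_div, div_mul_cancel_right₀ hM.ne', one_div]
  refine T4_mul_exp_mul_ge (by linarith) ?_ (by positivity) ?_
  · nlinarith
  · nlinarith

/-- For `M ≥ 1`, `k = 1/(24M²)`, `η = k/2`, `h(y) = y·e^{ky}`, the quantity
`T₄(y) = 4h''(y)·y - (4 + 2/(1-η))·(y·h'(y)²/h(y)) + 6h'(y) - η·h(y)` satisfies
`T₄(y) ≥ (1/8)·k·h(y)` on `[1, M²]`. -/
theorem T4_lower_bound (M : ℝ) (hM : 1 ≤ M) :
    ∀ y ∈ Set.Icc (1 : ℝ) (M ^ 2),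
      (let k : ℝ := 1 / (24 * M ^ 2);
       let η : ℝ := k / 2;
       let h : ℝ → ℝ := fun y => y * Real.exp (k * y);
       4 * deriv (deriv h) y * y
         - (4 + 2 / (1 - η)) * (y * (deriv h y) ^ 2 / h y)
         + 6 * deriv h y - η * h y) ≥
      (1 / 8) * (1 / (24 * M ^ 2)) * (y * Real.exp ((1 / (24 * M ^ 2)) * y)) :=
  T4_lower_bound_general M
end
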